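/- arXiv:2304.11927 — 2 statements merged into one kernel-verified Lean document; each statement's English description precedes it below -/
import Mathlib

section
/- Let φ be an AV-uniform ABMV rule. Let G = (R ∪ B, E) be a bipartite graph with no isolated vertices and R ≠ ∅, let d = max_{b∈B} deg_G(b) and d' = max_{r∈R} deg_G(r), and let κ ≥ 1 be an integer with |R| ≤ κ(d+1) and |B| ≥ κ + d'. Write |R| = κ'(d+1) + t for the unique integers κ' ≥ 0 and 0 ≤ t ≤ d. Construct the election with candidates: c(r) for each r ∈ R; a set X of d+1−t fresh candidates; for each b ∈ B, a set C(b) of d − deg_G(b) fresh candidates; and a fresh candidate p; and partition C(R) ∪ X into κ'+1 blocks X_1, …, X_{κ'+1} of d+1 candidates each, where C(S) = {c(u) : u ∈ S}. Votes V: for each i ∈ {1, …, κ'+1}, κ copies of the vote X_i; and for each b ∈ B, one vote v(b) = {p} ∪ C(N_G(b)) ∪ C(b) (which has exactly d+1 members). Let k = |R|. Then there exists B' ⊆ B with |B'| = κ dominating R if and only if there exists a submultiset V' ⊆ V with |V'| ≤ |B| − κ such that p is not contained in any winning k-committee of φ at (C, V ∖ V'). -/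
/-!
Every vote approves exactly `d + 1` candidates, so `φ` selects the AV winners: the
`|R|`-committees maximizing the total number of approvals of their members, which an exchange
argument compares candidate by candidate. Each `c(r)` gets `κ` approvals from its block, every
candidate other than `p` and the `c(r)` gets at most `κ`, and `p` gets one approval from each
remaining blue vote.

If `B'` dominates `R`, keep only the blue votes of `B'`: then `p` has `κ` approvals and every
`c(r)` at least `κ + 1`, so the `|R|` candidates `c(r)` beat `p`. Conversely, suppose `p` loses
after at most `|B| - κ` deletions, so that `p` keeps `m ≥ κ` approvals. Every member of a winning
committee has more than `m` approvals, for otherwise exchanging it for `p` would give a winning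
committee containing `p`; hence that committee is `C(R)`. As the blocks give `c(r)` only `κ`
approvals, fewer than `κ` of the `m` surviving blue votes miss `c(r)`, so any `κ` of them come
from blue vertices dominating `R`.
-/

open Finset

attribute [local instance] Classical.propDecidable

universe u

variable {α : Type u}

/-- The Thiele ω-score of a committee `w` in the election with votes `V`. -/
noncomputable def thieleScore [DecidableEq α] (ω : ℕ → ℝ) (V : Multiset (Finset α))
    (w : Finset α) : ℝ :=
  (V.map fun v => ω (v ∩ w).card).sum

/-- The ω margin contribution of candidate `c` to committee `w`. -/
noncomputable def marginContrib [DecidableEq α] (ω : ℕ → ℝ) (V : Multiset (Finset α))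
    (w : Finset α) (c : α) : ℝ :=
  thieleScore ω V (insert c w) - thieleScore ω V w

/-- Candidates of `C \ w` whose ω margin contribution to `w` is maximum. -/
noncomputable def maxMarginSet [DecidableEq α] (ω : ℕ → ℝ) (V : Multiset (Finset α))
    (C w : Finset α) : Finset α :=
  (C \ w).filter fun c => ∀ c' ∈ C \ w, marginContrib ω V w c' ≤ marginContrib ω V w c

/-- Among the maximizers, the candidate(s) earliest in the tie-breaking order `pri`
(the order with `a ⊳ b` iff `pri a < pri b`). -/
noncomputable def seqNext [DecidableEq α] (ω : ℕ → ℝ) (pri : α → ℕ) (V : Multiset (Finset α))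
    (C w : Finset α) : Finset α :=
  (maxMarginSet ω V C w).filter fun c => ∀ c' ∈ maxMarginSet ω V C w, pri c ≤ pri c'

/-- The winning `k`-committee of the sequential ω-Thiele rule with tie-breaking order `pri`:
starting from `∅`, repeatedly add the candidate with maximum ω margin contribution,
breaking ties in favor of the candidate earliest in the order. -/
noncomputable def seqCommittee [DecidableEq α] (ω : ℕ → ℝ) (pri : α → ℕ)
    (V : Multiset (Finset α)) (C : Finset α) : ℕ → Finset α
  | 0 => ∅
  | k + 1 => seqCommittee ω pri V C k ∪ seqNext ω pri V C (seqCommittee ω pri V C k)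

/-- The AV score of a committee. -/
noncomputable def avScore [DecidableEq α] (V : Multiset (Finset α)) (w : Finset α) : ℕ :=
  (V.map fun v => (v ∩ w).card).sum

/-- AV winning `k`-committees: the `k`-subsets of `C` of maximum AV score. -/
noncomputable def avWinners [DecidableEq α] (C : Finset α) (V : Multiset (Finset α)) (k : ℕ) :
    Finset (Finset α) :=
  (C.powersetCard k).filter fun w => ∀ w' ∈ C.powersetCard k, avScore V w' ≤ avScore V w

/-- The SAV score of a committee. -/
noncomputable def savScore [DecidableEq α] (V : Multiset (Finset α)) (w : Finset α) : ℝ :=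
  (V.map fun v => ((w ∩ v).card : ℝ) / (v.card : ℝ)).sum

/-- SAV winning `k`-committees: the `k`-subsets of `C` of maximum SAV score. -/
noncomputable def savWinners [DecidableEq α] (C : Finset α) (V : Multiset (Finset α)) (k : ℕ) :
    Finset (Finset α) :=
  (C.powersetCard k).filter fun w => ∀ w' ∈ C.powersetCard k, savScore V w' ≤ savScore V w

/-- The NSAV score of a committee (with respect to candidate set `C`). -/
noncomputable def nsavScore [DecidableEq α] (C : Finset α) (V : Multiset (Finset α))
    (w : Finset α) : ℝ :=
  (V.map fun v => ((w ∩ v).card : ℝ) / (v.card : ℝ)).sum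
    - (V.map fun v => ((w \ v).card : ℝ) / ((C \ v).card : ℝ)).sum

/-- The PAV score of a committee. -/
noncomputable def pavScore [DecidableEq α] (V : Multiset (Finset α)) (w : Finset α) : ℝ :=
  (V.map fun v => ∑ i ∈ Finset.range (v ∩ w).card, (1 : ℝ) / (i + 1)).sum

/-- PAV winning `k`-committees: the `k`-subsets of `C` of maximum PAV score. -/
noncomputable def pavWinners [DecidableEq α] (C : Finset α) (V : Multiset (Finset α)) (k : ℕ) :
    Finset (Finset α) :=
  (C.powersetCard k).filter fun w => ∀ w' ∈ C.powersetCard k, pavScore V w' ≤ pavScore V w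

/-- The ABCCV score of a committee: the number of votes approving at least one member. -/
noncomputable def abccvScore [DecidableEq α] (V : Multiset (Finset α)) (w : Finset α) : ℕ :=
  Multiset.card (V.filter fun v => (v ∩ w).Nonempty)

/-- ABCCV winning `k`-committees: the `k`-subsets of `C` of maximum ABCCV score. -/
noncomputable def abccvWinners [DecidableEq α] (C : Finset α) (V : Multiset (Finset α)) (k : ℕ) :
    Finset (Finset α) :=
  (C.powersetCard k).filter fun w => ∀ w' ∈ C.powersetCard k, abccvScore V w' ≤ abccvScore V w

/-- The MAV score of a committee: the maximum Hamming distance to a vote. -/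
noncomputable def mavScore [DecidableEq α] (V : Multiset (Finset α)) (w : Finset α) : ℕ :=
  (V.map fun v => (w \ v).card + (v \ w).card).sup

/-- MAV winning `k`-committees: the `k`-subsets of `C` of minimum MAV score. -/
noncomputable def mavWinners [DecidableEq α] (C : Finset α) (V : Multiset (Finset α)) (k : ℕ) :
    Finset (Finset α) :=
  (C.powersetCard k).filter fun w => ∀ w' ∈ C.powersetCard k, mavScore V w ≤ mavScore V w'

namespace Stmt14

variable {β : Type u} [DecidableEq β]

/-- Candidate type: `c(r)` for a red vertex `r`, a fresh candidate of the set `X`,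
a fresh candidate of a set `C(b)`, or the distinguished candidate `p`. -/
abbrev Cand (β : Type u) := β ⊕ ℕ ⊕ (β × ℕ) ⊕ Unit

/-- The distinguished candidate `p`. -/
def pc : Cand β := Sum.inr (Sum.inr (Sum.inr ()))

/-- The neighbors of the red vertex `r`. -/
def nbrR (Ed : Finset (β × β)) (r : β) : Finset β := (Ed.filter fun e => e.1 = r).image Prod.snd

/-- The neighbors of the blue vertex `b`. -/
def nbrB (Ed : Finset (β × β)) (b : β) : Finset β := (Ed.filter fun e => e.2 = b).image Prod.fst

/-- The set `X` of `d + 1 − t` fresh candidates. -/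
def Xset (d t : ℕ) : Finset (Cand β) :=
  (Finset.range (d + 1 - t)).image fun j => (Sum.inr (Sum.inl j) : Cand β)

/-- The set `C(b)` of `d − deg_G(b)` fresh candidates created for the blue vertex `b`. -/
def CbSet (Ed : Finset (β × β)) (d : ℕ) (b : β) : Finset (Cand β) :=
  (Finset.range (d - (nbrB Ed b).card)).image
    fun i => (Sum.inr (Sum.inr (Sum.inl (b, i))) : Cand β)

/-- The whole candidate set. -/
def Ctot (Ed : Finset (β × β)) (R B : Finset β) (d t : ℕ) : Finset (Cand β) :=
  insert pc (R.image Sum.inl ∪ Xset d t ∪ B.biUnion (CbSet Ed d))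

/-- The vote `v(b) = {p} ∪ C(N_G(b)) ∪ C(b)` of a blue vertex `b`. -/
def vb (Ed : Finset (β × β)) (d : ℕ) (b : β) : Finset (Cand β) :=
  insert pc ((nbrB Ed b).image Sum.inl ∪ CbSet Ed d b)

/-- The votes: for each `i ≤ κ'`, `κ` copies of the block `X_i`, and for each blue
vertex `b ∈ B`, the vote `v(b)`. -/
def votes (Ed : Finset (β × β)) (B : Finset β) (d κ κ' : ℕ) (Xb : ℕ → Finset (Cand β)) :
    Multiset (Finset (Cand β)) :=
  (Finset.range (κ' + 1)).val.bind (fun i => Multiset.replicate κ (Xb i))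
    + B.val.map (vb Ed d)

end Stmt14

theorem Multiset.countP_replicate {γ : Type*} (p : γ → Prop) [DecidablePred p] (n : ℕ) (a : γ) :
    (Multiset.replicate n a).countP p = if p a then n else 0 := by
  split_ifs with h
  · exact (Multiset.countP_eq_card.2 fun b hb => Multiset.eq_of_mem_replicate hb ▸ h).trans
      (Multiset.card_replicate n a)
  · exact Multiset.countP_eq_zero.2 fun b hb => Multiset.eq_of_mem_replicate hb ▸ h

theorem Multiset.exists_le_map_eq_of_le_map {γ δ : Type*} {f : γ → δ} {s : Multiset γ}
    {M : Multiset δ} (h : M ≤ s.map f) : ∃ t ≤ s, t.map f = M := by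
  induction s using Quotient.inductionOn
  induction M using Quotient.inductionOn
  obtain ⟨l, hperm, hsub⟩ := h
  obtain ⟨l', hl', rfl⟩ := List.sublist_map_iff.1 hsub
  exact ⟨l', hl'.subperm, Quot.sound hperm⟩

section Approvals

variable [DecidableEq α]

def approvals (V : Multiset (Finset α)) (c : α) : ℕ := V.countP (c ∈ ·)

theorem approvals_add (V W : Multiset (Finset α)) (x : α) :
    approvals (V + W) x = approvals V x + approvals W x :=
  Multiset.countP_add _ _ _

theorem approvals_mono {V W : Multiset (Finset α)} (h : V ≤ W) (x : α) :
    approvals V x ≤ approvals W x :=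
  Multiset.countP_le_of_le _ h

theorem approvals_bind_replicate {ι : Type*} (I : Finset ι) (Y : ι → Finset α)
    (n : ℕ) (x : α) :
    approvals (I.val.bind fun i => Multiset.replicate n (Y i)) x = n * #{i ∈ I | x ∈ Y i} := by
  induction I using Finset.induction_on with
  | empty => simp [approvals]
  | insert a I ha ih =>
    rw [Finset.insert_val_of_notMem ha, Multiset.cons_bind, approvals_add, ih,
      Finset.filter_insert, approvals, Multiset.countP_replicate]
    split_ifs with h
    · rw [Finset.card_insert_of_notMem (by simp [ha])]
      ring
    · ring

theorem avScore_eq_sum_approvals (V : Multiset (Finset α)) (w : Finset α) :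
    avScore V w = ∑ c ∈ w, approvals V c := by
  induction V using Multiset.induction_on with
  | empty => simp [avScore, approvals]
  | cons v V ih =>
    simp only [avScore, approvals, Multiset.map_cons, Multiset.sum_cons,
      Multiset.countP_cons] at ih ⊢
    rw [ih, Finset.sum_add_distrib, Finset.sum_boole, Finset.filter_mem_eq_inter,
      Finset.inter_comm, add_comm]
    simp

theorem avWinners_nonempty {C : Finset α} {V : Multiset (Finset α)} {k : ℕ} (h : k ≤ #C) :
    (avWinners C V k).Nonempty := by
  obtain ⟨w, hw, hmax⟩ :=
    (C.powersetCard k).exists_max_image (avScore V) (Finset.powersetCard_nonempty.2 h)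
  exact ⟨w, Finset.mem_filter.2 ⟨hw, hmax⟩⟩

section Exchange

variable {C w : Finset α} {V : Multiset (Finset α)} {k : ℕ} {x y : α}

theorem avScore_exchange (hx : x ∈ w) (hyw : y ∉ w) :
    avScore V (insert y (w.erase x)) + approvals V x = avScore V w + approvals V y := by
  rw [avScore_eq_sum_approvals, avScore_eq_sum_approvals,
    Finset.sum_insert fun hy => hyw (Finset.mem_of_mem_erase hy), ← Finset.sum_erase_add w _ hx]
  ring

theorem exchange_mem_powersetCard (hw : w ∈ C.powersetCard k) (hx : x ∈ w) (hy : y ∈ C)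
    (hyw : y ∉ w) : insert y (w.erase x) ∈ C.powersetCard k := by
  rw [Finset.mem_powersetCard] at hw ⊢
  refine ⟨Finset.insert_subset hy ((w.erase_subset x).trans hw.1), ?_⟩
  rw [Finset.card_insert_of_notMem fun hy => hyw (Finset.mem_of_mem_erase hy),
    Finset.card_erase_add_one hx, hw.2]

theorem approvals_le_of_mem_avWinners (hw : w ∈ avWinners C V k) (hx : x ∈ w) (hy : y ∈ C)
    (hyw : y ∉ w) : approvals V y ≤ approvals V x := by
  rw [avWinners, Finset.mem_filter] at hw
  have := hw.2 _ (exchange_mem_powersetCard hw.1 hx hy hyw)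
  have := avScore_exchange (V := V) hx hyw
  omega

theorem exchange_mem_avWinners (hw : w ∈ avWinners C V k) (hx : x ∈ w) (hy : y ∈ C)
    (hyw : y ∉ w) (hxy : approvals V x ≤ approvals V y) :
    insert y (w.erase x) ∈ avWinners C V k := by
  rw [avWinners, Finset.mem_filter] at hw ⊢
  refine ⟨exchange_mem_powersetCard hw.1 hx hy hyw, fun w' hw' => ?_⟩
  have := hw.2 w' hw'
  have := avScore_exchange (V := V) hx hyw
  omega

theorem notMem_of_mem_avWinners_of_approvals_lt {S : Finset α} {p : α}
    (hSC : S ⊆ C) (hkS : k ≤ #S) (hpS : p ∉ S)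
    (hS : ∀ c ∈ S, approvals V p < approvals V c) (hw : w ∈ avWinners C V k) : p ∉ w := by
  intro hpw
  have hcard : #w = k := (Finset.mem_powersetCard.1 (Finset.mem_filter.1 hw).1).2
  obtain ⟨c, hcS, hcw⟩ : ∃ c ∈ S, c ∉ w := by
    by_contra! hSw
    have := Finset.card_le_card (Finset.insert_subset hpw hSw)
    rw [Finset.card_insert_of_notMem hpS] at this
    omega
  exact (hS c hcS).not_ge (approvals_le_of_mem_avWinners hw hpw (hSC hcS) hcw)

theorem approvals_lt_of_mem_avWinners_of_forall_notMem {p : α} (hpC : p ∈ C)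
    (hp : ∀ w' ∈ avWinners C V k, p ∉ w') (hw : w ∈ avWinners C V k)
    (hx : x ∈ w) : approvals V p < approvals V x := by
  by_contra! hxp
  exact hp _ (exchange_mem_avWinners hw hx hpC (hp w hw) hxp) (Finset.mem_insert_self p _)

end Exchange

end Approvals

namespace Stmt14

variable {β : Type u}

def blockVotes (κ κ' : ℕ) (Xb : ℕ → Finset (Cand β)) : Multiset (Finset (Cand β)) :=
  (Finset.range (κ' + 1)).val.bind fun i => Multiset.replicate κ (Xb i)

section Blocks

variable {κ κ' : ℕ} {Xb : ℕ → Finset (Cand β)}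

theorem mem_blockVotes {v : Finset (Cand β)} (hv : v ∈ blockVotes κ κ' Xb) :
    ∃ i ∈ Finset.range (κ' + 1), v = Xb i := by
  obtain ⟨i, hi, hvi⟩ := Multiset.mem_bind.1 hv
  exact ⟨i, hi, Multiset.eq_of_mem_replicate hvi⟩

variable [DecidableEq β]

theorem approvals_blockVotes_le
    (hdisj : ∀ i ∈ Finset.range (κ' + 1), ∀ j ∈ Finset.range (κ' + 1), i ≠ j →
      Disjoint (Xb i) (Xb j)) (x : Cand β) :
    approvals (blockVotes κ κ' Xb) x ≤ κ := by
  have : #{i ∈ Finset.range (κ' + 1) | x ∈ Xb i} ≤ 1 := by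
    refine Finset.card_le_one.2 fun i hi j hj => ?_
    rw [Finset.mem_filter] at hi hj
    by_contra hij
    exact Finset.disjoint_left.1 (hdisj i hi.1 j hj.1 hij) hi.2 hj.2
  rw [blockVotes, approvals_bind_replicate]
  nlinarith

theorem le_approvals_blockVotes {x : Cand β} (hx : x ∈ (Finset.range (κ' + 1)).biUnion Xb) :
    κ ≤ approvals (blockVotes κ κ' Xb) x := by
  obtain ⟨i, hi, hxi⟩ := Finset.mem_biUnion.1 hx
  have : 1 ≤ #{i ∈ Finset.range (κ' + 1) | x ∈ Xb i} :=
    Finset.card_pos.2 ⟨i, Finset.mem_filter.2 ⟨hi, hxi⟩⟩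
  rw [blockVotes, approvals_bind_replicate]
  nlinarith

theorem approvals_blockVotes_eq_zero {x : Cand β}
    (hx : x ∉ (Finset.range (κ' + 1)).biUnion Xb) : approvals (blockVotes κ κ' Xb) x = 0 :=
  Multiset.countP_eq_zero.2 fun v hv hxv => by
    obtain ⟨i, hi, rfl⟩ := mem_blockVotes hv
    exact hx (Finset.mem_biUnion.2 ⟨i, hi, hxv⟩)

end Blocks

variable [DecidableEq β]

theorem mem_nbrB {Ed : Finset (β × β)} {r b : β} : r ∈ nbrB Ed b ↔ (r, b) ∈ Ed := by
  simp [nbrB]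

theorem pc_mem_vb (Ed : Finset (β × β)) (d : ℕ) (b : β) : (pc : Cand β) ∈ vb Ed d b :=
  Finset.mem_insert_self _ _

theorem inl_mem_vb {Ed : Finset (β × β)} {d : ℕ} {r b : β} :
    (Sum.inl r : Cand β) ∈ vb Ed d b ↔ (r, b) ∈ Ed := by
  simp [vb, pc, CbSet, mem_nbrB]

theorem card_vb {Ed : Finset (β × β)} {d : ℕ} {b : β} (hb : #(nbrB Ed b) ≤ d) :
    #(vb Ed d b) = d + 1 := by
  have hdisj : Disjoint ((nbrB Ed b).image Sum.inl) (CbSet Ed d b) := by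
    simp [Finset.disjoint_left, CbSet]
  rw [vb, Finset.card_insert_of_notMem (by simp [pc, CbSet]), Finset.card_union_of_disjoint hdisj,
    Finset.card_image_of_injective _ Sum.inl_injective, CbSet,
    Finset.card_image_of_injective _ (fun i j hij => by simpa using hij), Finset.card_range]
  omega

theorem vb_subset_Ctot {Ed : Finset (β × β)} {R B : Finset β} {d t : ℕ} {b : β}
    (hEd : ∀ e ∈ Ed, e.1 ∈ R ∧ e.2 ∈ B) (hb : b ∈ B) : vb Ed d b ⊆ Ctot Ed R B d t := by
  intro x hx
  simp only [vb, Finset.mem_insert, Finset.mem_union, Finset.mem_image, mem_nbrB] at hx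
  rcases hx with rfl | ⟨r, hr, rfl⟩ | hx
  · exact Finset.mem_insert_self _ _
  · simp [Ctot, (hEd _ hr).1]
  · simp only [Ctot, Finset.mem_insert, Finset.mem_union, Finset.mem_biUnion]
    exact Or.inr (Or.inr ⟨b, hb, hx⟩)

theorem approvals_map_vb (Ed : Finset (β × β)) (B : Finset β) (d : ℕ) (x : Cand β) :
    approvals (B.val.map (vb Ed d)) x = #{b ∈ B | x ∈ vb Ed d b} :=
  Multiset.countP_map _ _ _

theorem approvals_votes (Ed : Finset (β × β)) (B : Finset β) (d κ κ' : ℕ)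
    (Xb : ℕ → Finset (Cand β)) (x : Cand β) :
    approvals (votes Ed B d κ κ' Xb) x =
      approvals (blockVotes κ κ' Xb) x + #{b ∈ B | x ∈ vb Ed d b} := by
  rw [votes, ← blockVotes, approvals_add, approvals_map_vb]

section Votes

variable {Ed : Finset (β × β)} {R B : Finset β} {d t κ κ' : ℕ} {Xb : ℕ → Finset (Cand β)}

theorem votes_sub_map_sdiff {B' : Finset β} (h : B' ⊆ B) :
    votes Ed B d κ κ' Xb - (B \ B').val.map (vb Ed d) = votes Ed B' d κ κ' Xb := by
  have hB : B.val = B'.val + (B \ B').val := by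
    rw [Finset.sdiff_val, add_tsub_cancel_of_le (Finset.val_le_iff.2 h)]
  rw [votes, votes, hB, Multiset.map_add, ← add_assoc, add_tsub_cancel_right]

theorem pc_notMem_of_mem_blockVotes
    (hunion : (Finset.range (κ' + 1)).biUnion Xb = R.image Sum.inl ∪ Xset d t)
    {v : Finset (Cand β)} (hv : v ∈ blockVotes κ κ' Xb) : pc ∉ v := by
  obtain ⟨i, hi, rfl⟩ := mem_blockVotes hv
  intro hpc
  have := Finset.mem_biUnion.2 ⟨i, hi, hpc⟩
  simp [hunion, pc, Xset] at this

theorem filter_pc_mem_votes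
    (hunion : (Finset.range (κ' + 1)).biUnion Xb = R.image Sum.inl ∪ Xset d t) :
    (votes Ed B d κ κ' Xb).filter (pc ∈ ·) = B.val.map (vb Ed d) := by
  rw [votes, ← blockVotes, Multiset.filter_add,
    Multiset.filter_eq_nil.2 fun v hv => pc_notMem_of_mem_blockVotes hunion hv,
    Multiset.filter_eq_self.2 fun v hv => ?_, zero_add]
  obtain ⟨b, -, rfl⟩ := Multiset.mem_map.1 hv
  exact pc_mem_vb Ed d b

theorem filter_pc_notMem_votes
    (hunion : (Finset.range (κ' + 1)).biUnion Xb = R.image Sum.inl ∪ Xset d t) :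
    (votes Ed B d κ κ' Xb).filter (pc ∉ ·) = blockVotes κ κ' Xb := by
  rw [votes, ← blockVotes, Multiset.filter_add,
    Multiset.filter_eq_self.2 fun v hv => pc_notMem_of_mem_blockVotes hunion hv,
    Multiset.filter_eq_nil.2 fun v hv => ?_, add_zero]
  obtain ⟨b, -, rfl⟩ := Multiset.mem_map.1 hv
  exact not_not.2 (pc_mem_vb Ed d b)

theorem subset_Ctot_of_mem_votes (hEd : ∀ e ∈ Ed, e.1 ∈ R ∧ e.2 ∈ B)
    (hunion : (Finset.range (κ' + 1)).biUnion Xb = R.image Sum.inl ∪ Xset d t)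
    {v : Finset (Cand β)} (hv : v ∈ votes Ed B d κ κ' Xb) : v ⊆ Ctot Ed R B d t := by
  rcases Multiset.mem_add.1 hv with hv | hv
  · obtain ⟨i, hi, rfl⟩ := mem_blockVotes hv
    intro x hx
    have hx' : x ∈ R.image Sum.inl ∪ Xset d t := hunion ▸ Finset.mem_biUnion.2 ⟨i, hi, hx⟩
    exact Finset.mem_insert_of_mem (Finset.mem_union_left _ hx')
  · obtain ⟨b, hb, rfl⟩ := Multiset.mem_map.1 hv
    exact vb_subset_Ctot hEd hb

theorem card_of_mem_votes (hdeg : ∀ b ∈ B, #(nbrB Ed b) ≤ d)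
    (hXbcard : ∀ i ∈ Finset.range (κ' + 1), #(Xb i) = d + 1)
    {v : Finset (Cand β)} (hv : v ∈ votes Ed B d κ κ' Xb) : #v = d + 1 := by
  rcases Multiset.mem_add.1 hv with hv | hv
  · obtain ⟨i, hi, rfl⟩ := mem_blockVotes hv
    exact hXbcard i hi
  · obtain ⟨b, hb, rfl⟩ := Multiset.mem_map.1 hv
    exact card_vb (hdeg b hb)

theorem approvals_votes_le_of_notMem (hκ : 1 ≤ κ)
    (hdisj : ∀ i ∈ Finset.range (κ' + 1), ∀ j ∈ Finset.range (κ' + 1), i ≠ j →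
      Disjoint (Xb i) (Xb j))
    (hunion : (Finset.range (κ' + 1)).biUnion Xb = R.image Sum.inl ∪ Xset d t)
    {x : Cand β} (hx : x ∈ Ctot Ed R B d t) (hxR : x ∉ R.image Sum.inl) (hxp : x ≠ pc) :
    approvals (votes Ed B d κ κ' Xb) x ≤ κ := by
  rw [approvals_votes]
  simp only [Ctot, Finset.mem_insert, Finset.mem_union, Finset.mem_biUnion] at hx
  rcases hx with rfl | (hxR' | hX) | ⟨b₀, -, hC⟩
  · exact absurd rfl hxp
  · exact absurd hxR' hxR
  · obtain ⟨j, -, rfl⟩ := Finset.mem_image.1 hX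
    have hvb : #{b ∈ B | Sum.inr (Sum.inl j) ∈ vb Ed d b} = 0 := by
      simp [vb, pc, CbSet]
    have := approvals_blockVotes_le (κ := κ) hdisj (Sum.inr (Sum.inl j))
    omega
  · obtain ⟨j, -, rfl⟩ := Finset.mem_image.1 hC
    have hvb : #{b ∈ B | Sum.inr (Sum.inr (Sum.inl (b₀, j))) ∈ vb Ed d b} ≤ 1 :=
      Finset.card_le_one.2 fun b hb b' hb' => by
        simp [vb, pc, CbSet] at hb hb'
        rw [hb.2.2, hb'.2.2]
    rw [approvals_blockVotes_eq_zero (by simp [hunion, Xset])]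
    omega

theorem image_inl_subset_Ctot : R.image Sum.inl ⊆ Ctot Ed R B d t :=
  fun _ hx => Finset.mem_insert_of_mem (Finset.mem_union_left _ (Finset.mem_union_left _ hx))

theorem card_le_card_Ctot : #R ≤ #(Ctot Ed R B d t) := by
  simpa [Finset.card_image_of_injective _ Sum.inl_injective] using
    Finset.card_le_card (image_inl_subset_Ctot (Ed := Ed) (R := R) (B := B) (d := d) (t := t))

theorem approvals_votes_pc
    (hunion : (Finset.range (κ' + 1)).biUnion Xb = R.image Sum.inl ∪ Xset d t) :
    approvals (votes Ed B d κ κ' Xb) pc = #B := by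
  rw [approvals_votes, approvals_blockVotes_eq_zero (by simp [hunion, pc, Xset]),
    Finset.filter_true_of_mem fun b _ => pc_mem_vb Ed d b, zero_add]

theorem forall_pc_notMem_avWinners_of_dominating
    (hunion : (Finset.range (κ' + 1)).biUnion Xb = R.image Sum.inl ∪ Xset d t)
    {B' : Finset β} (hB' : #B' = κ) (hdom : ∀ r ∈ R, ∃ b ∈ B', (r, b) ∈ Ed) :
    ∀ w ∈ avWinners (Ctot Ed R B d t) (votes Ed B' d κ κ' Xb) #R, pc ∉ w := by
  intro w hw
  refine notMem_of_mem_avWinners_of_approvals_lt image_inl_subset_Ctot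
    (Finset.card_image_of_injective _ Sum.inl_injective).ge (by simp [pc]) (fun c hc => ?_) hw
  obtain ⟨r, hr, rfl⟩ := Finset.mem_image.1 hc
  obtain ⟨b, hb, hrb⟩ := hdom r hr
  have hblock := le_approvals_blockVotes (κ := κ)
    (hunion ▸ Finset.mem_union_left _ (Finset.mem_image_of_mem Sum.inl hr))
  have hblue : 0 < #{b ∈ B' | Sum.inl r ∈ vb Ed d b} :=
    Finset.card_pos.2 ⟨b, Finset.mem_filter.2 ⟨hb, inl_mem_vb.2 hrb⟩⟩
  rw [approvals_votes_pc hunion, approvals_votes]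
  omega

theorem approvals_pc_lt_of_forall_pc_notMem (hκ : 1 ≤ κ)
    (hdisj : ∀ i ∈ Finset.range (κ' + 1), ∀ j ∈ Finset.range (κ' + 1), i ≠ j →
      Disjoint (Xb i) (Xb j))
    (hunion : (Finset.range (κ' + 1)).biUnion Xb = R.image Sum.inl ∪ Xset d t)
    {V : Multiset (Finset (Cand β))} (hV : V ≤ votes Ed B d κ κ' Xb) (hκV : κ ≤ approvals V pc)
    (hno : ∀ w ∈ avWinners (Ctot Ed R B d t) V #R, pc ∉ w) :
    ∀ r ∈ R, approvals V pc < approvals V (Sum.inl r) := by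
  have hpC : (pc : Cand β) ∈ Ctot Ed R B d t := Finset.mem_insert_self _ _
  have hRC : #R ≤ #(Ctot Ed R B d t) := card_le_card_Ctot
  obtain ⟨w, hw⟩ := avWinners_nonempty (V := V) hRC
  have hwC := Finset.mem_powersetCard.1 (Finset.mem_filter.1 hw).1
  have hwR : w ⊆ R.image Sum.inl := by
    intro x hx
    by_contra hxR
    have hlt := approvals_lt_of_mem_avWinners_of_forall_notMem hpC hno hw hx
    have hle := (approvals_mono hV x).trans (approvals_votes_le_of_notMem hκ hdisj hunion
      (hwC.1 hx) hxR fun hxp => hno w hw (hxp ▸ hx))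
    omega
  have hw_eq : w = R.image Sum.inl := Finset.eq_of_subset_of_card_le hwR
    (by rw [Finset.card_image_of_injective _ Sum.inl_injective, hwC.2])
  exact fun r hr => approvals_lt_of_mem_avWinners_of_forall_notMem hpC hno hw
    (hw_eq ▸ Finset.mem_image_of_mem Sum.inl hr)

theorem exists_filter_pc_mem_eq_map
    (hunion : (Finset.range (κ' + 1)).biUnion Xb = R.image Sum.inl ∪ Xset d t)
    {V : Multiset (Finset (Cand β))} (hV : V ≤ votes Ed B d κ κ' Xb) :
    ∃ S ⊆ B, V.filter (pc ∈ ·) = S.val.map (vb Ed d) := by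
  obtain ⟨s, hs, hmap⟩ := Multiset.exists_le_map_eq_of_le_map
    ((Multiset.filter_le_filter _ hV).trans (filter_pc_mem_votes hunion).le)
  exact ⟨⟨s, Multiset.nodup_of_le hs B.nodup⟩, Finset.val_le_iff.1 hs, hmap.symm⟩

theorem exists_dominating_of_approvals_pc_lt
    (hdisj : ∀ i ∈ Finset.range (κ' + 1), ∀ j ∈ Finset.range (κ' + 1), i ≠ j →
      Disjoint (Xb i) (Xb j))
    (hunion : (Finset.range (κ' + 1)).biUnion Xb = R.image Sum.inl ∪ Xset d t)
    {V : Multiset (Finset (Cand β))} (hV : V ≤ votes Ed B d κ κ' Xb) (hκV : κ ≤ approvals V pc)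
    (hlt : ∀ r ∈ R, approvals V pc < approvals V (Sum.inl r)) :
    ∃ B' ⊆ B, #B' = κ ∧ ∀ r ∈ R, ∃ b ∈ B', (r, b) ∈ Ed := by
  obtain ⟨S, hSB, hS⟩ := exists_filter_pc_mem_eq_map hunion hV
  have hSpc : #S = approvals V pc := by
    rw [approvals, Multiset.countP_eq_card_filter, hS, Multiset.card_map]
    rfl
  have hmiss : ∀ r ∈ R, #{b ∈ S | (r, b) ∉ Ed} < κ := by
    intro r hr
    have hsplit : approvals V (Sum.inl r) = approvals (V.filter (pc ∈ ·)) (Sum.inl r) +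
        approvals (V.filter (pc ∉ ·)) (Sum.inl r) :=
      Multiset.countP_eq_countP_filter_add V _ _
    have hblue : approvals (V.filter (pc ∈ ·)) (Sum.inl r) = #{b ∈ S | (r, b) ∈ Ed} := by
      simp only [hS, approvals_map_vb, inl_mem_vb]
    have hblock : approvals (V.filter (pc ∉ ·)) (Sum.inl r) ≤ κ :=
      (approvals_mono (Multiset.filter_le_filter _ hV) _).trans
        (filter_pc_notMem_votes hunion ▸ approvals_blockVotes_le hdisj _)
    have := S.card_filter_add_card_filter_not (fun b => (r, b) ∈ Ed)
    have := hlt r hr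
    omega
  obtain ⟨B', hB'S, hB'⟩ := Finset.exists_subset_card_eq (hκV.trans hSpc.ge)
  refine ⟨B', hB'S.trans hSB, hB', fun r hr => ?_⟩
  by_contra! hmissB'
  have : B' ⊆ S.filter fun b => (r, b) ∉ Ed :=
    fun b hb => Finset.mem_filter.2 ⟨hB'S hb, hmissB' b hb⟩
  have := Finset.card_le_card this
  have := hmiss r hr
  omega

end Votes

theorem dcdv_av_uniform_general
    (φ : Finset (Cand β) → Multiset (Finset (Cand β)) → ℕ → Finset (Finset (Cand β)))
    (huniform : ∀ (C : Finset (Cand β)) (V : Multiset (Finset (Cand β))) (k : ℕ),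
      k ≤ C.card → (∀ v ∈ V, v ⊆ C) → (∃ s, ∀ v ∈ V, v.card = s) →
      φ C V k = avWinners C V k)
    (R B : Finset β) (Ed : Finset (β × β))
    (hEd : ∀ e ∈ Ed, e.1 ∈ R ∧ e.2 ∈ B)
    (d : ℕ) (hd : d = B.sup fun b => (nbrB Ed b).card)
    (d' : ℕ)
    (κ : ℕ) (hκ : 1 ≤ κ) (hBcard : κ + d' ≤ B.card)
    (κ' t : ℕ)
    (Xb : ℕ → Finset (Cand β))
    (hXbcard : ∀ i ∈ Finset.range (κ' + 1), (Xb i).card = d + 1)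
    (hXbdisj : ∀ i ∈ Finset.range (κ' + 1), ∀ j ∈ Finset.range (κ' + 1), i ≠ j →
      Disjoint (Xb i) (Xb j))
    (hXbunion : (Finset.range (κ' + 1)).biUnion Xb = R.image Sum.inl ∪ Xset d t) :
    (∃ B' ⊆ B, B'.card = κ ∧ ∀ r ∈ R, ∃ b ∈ B', (r, b) ∈ Ed) ↔
      (∃ V' ≤ votes Ed B d κ κ' Xb, Multiset.card V' ≤ B.card - κ ∧
        ∀ w ∈ φ (Ctot Ed R B d t) (votes Ed B d κ κ' Xb - V') R.card, pc ∉ w) := by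
  have hdeg : ∀ b ∈ B, #(nbrB Ed b) ≤ d :=
    fun b hb => hd ▸ Finset.le_sup (f := fun b => #(nbrB Ed b)) hb
  have hφ : ∀ V ≤ votes Ed B d κ κ' Xb,
      φ (Ctot Ed R B d t) V #R = avWinners (Ctot Ed R B d t) V #R := fun V hV =>
    huniform _ _ _ card_le_card_Ctot
      (fun v hv => subset_Ctot_of_mem_votes hEd hXbunion (Multiset.mem_of_le hV hv))
      ⟨d + 1, fun v hv => card_of_mem_votes hdeg hXbcard (Multiset.mem_of_le hV hv)⟩
  constructor
  · rintro ⟨B', hB'B, hB', hdom⟩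
    refine ⟨(B \ B').val.map (vb Ed d),
      (Multiset.map_le_map (Finset.val_le_iff.2 Finset.sdiff_subset)).trans le_add_self, ?_, ?_⟩
    · rw [Multiset.card_map, ← hB', ← Finset.card_sdiff_of_subset hB'B]
      rfl
    · rw [hφ _ tsub_le_self, votes_sub_map_sdiff hB'B]
      exact forall_pc_notMem_avWinners_of_dominating hXbunion hB' hdom
  · rintro ⟨V', hV', hcard, hno⟩
    rw [hφ _ tsub_le_self] at hno
    have hκV : κ ≤ approvals (votes Ed B d κ κ' Xb - V') pc := by
      rw [approvals, Multiset.countP_sub hV', ← approvals, approvals_votes_pc hXbunion]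
      have := Multiset.countP_le_card (pc ∈ ·) V'
      omega
    exact exists_dominating_of_approvals_pc_lt hXbdisj hXbunion tsub_le_self hκV
      (approvals_pc_lt_of_forall_pc_notMem hκ hXbdisj hXbunion tsub_le_self hκV hno)

/-- correctness of the reduction from Red-Blue Dominating Set to
destructive control by deleting voters for every AV-uniform ABMV rule. -/
theorem dcdv_av_uniform
    (φ : Finset (Cand β) → Multiset (Finset (Cand β)) → ℕ → Finset (Finset (Cand β)))
    (huniform : ∀ (C : Finset (Cand β)) (V : Multiset (Finset (Cand β))) (k : ℕ),
      k ≤ C.card → (∀ v ∈ V, v ⊆ C) → (∃ s, ∀ v ∈ V, v.card = s) →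
      φ C V k = avWinners C V k)
    (R B : Finset β) (hRB : Disjoint R B) (Ed : Finset (β × β))
    (hEd : ∀ e ∈ Ed, e.1 ∈ R ∧ e.2 ∈ B)
    (hR : R.Nonempty)
    (hnoisoR : ∀ r ∈ R, (nbrR Ed r).Nonempty)
    (hnoisoB : ∀ b ∈ B, (nbrB Ed b).Nonempty)
    (d : ℕ) (hd : d = B.sup fun b => (nbrB Ed b).card)
    (d' : ℕ) (hd' : d' = R.sup fun r => (nbrR Ed r).card)
    (κ : ℕ) (hκ : 1 ≤ κ) (hRcard : R.card ≤ κ * (d + 1)) (hBcard : κ + d' ≤ B.card)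
    (κ' t : ℕ) (hκ't : R.card = κ' * (d + 1) + t) (ht : t ≤ d)
    (Xb : ℕ → Finset (Cand β))
    (hXbcard : ∀ i ∈ Finset.range (κ' + 1), (Xb i).card = d + 1)
    (hXbdisj : ∀ i ∈ Finset.range (κ' + 1), ∀ j ∈ Finset.range (κ' + 1), i ≠ j →
      Disjoint (Xb i) (Xb j))
    (hXbunion : (Finset.range (κ' + 1)).biUnion Xb = R.image Sum.inl ∪ Xset d t) :
    (∃ B' ⊆ B, B'.card = κ ∧ ∀ r ∈ R, ∃ b ∈ B', (r, b) ∈ Ed) ↔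
      (∃ V' ≤ votes Ed B d κ κ' Xb, Multiset.card V' ≤ B.card - κ ∧
        ∀ w ∈ φ (Ctot Ed R B d t) (votes Ed B d κ κ' Xb - V') R.card, pc ∉ w) :=
  dcdv_av_uniform_general φ huniform R B Ed hEd d hd d' κ hκ hBcard κ' t Xb hXbcard hXbdisj hXbunion

end Stmt14
end

section
/- Let ω be a Thiele function with ω(1) > 0. Let G = (R ∪ B, E) be a bipartite graph with no isolated vertices in which every r ∈ R has degree exactly d ≥ 1, and let κ ≥ 0 be an integer. Construct the election with candidates C = R ∪ X, where each r ∈ R is a candidate and X is a set of |R| fresh candidates; committee size k = |R|; and a tie-breaking linear order ⊳ placing all of R first and then all of X. Votes V: for each b ∈ B, one vote v(b) = N_G(b); and for each x ∈ X, d copies of the vote {x}. Then there exists B' ⊆ B with |B'| ≤ κ dominating R if and only if there exists a submultiset V' ⊆ V with |V'| ≤ κ such that no candidate of R is contained in the seqω winning k-committee of (C, V ∖ V') with respect to ⊳. -/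
/-! Every candidate of `R ∪ X` is approved by exactly `d` votes, and while the committee
lies in `X` no vote approving a candidate outside the committee meets it, so each margin
contribution is the candidate's approval count times `ω 1`. Deleting the votes `v(b)`,
`b ∈ B'`, of a dominating set leaves every `r ∈ R` with fewer than `d` approvals while each
`x ∈ X` keeps `d`, so the rule fills the committee with `X`. Conversely, if some `r ∈ R`
kept all its `d` approvals, it would tie for the maximum in the first round and, `R`
preceding `X` in the tie-breaking order, a candidate of `R` would be elected first. Hence
`V'` contains, for each `r`, a blue vote `v(b)` with `r ∈ N_G(b)`, and these `b` dominate `R`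
with `|B'| ≤ |V'|`. -/

open Finset

attribute [local instance] Classical.propDecidable

universe u

variable {α : Type u}

namespace Stmt15

variable {β : Type u} [DecidableEq β]

/-- Candidate type: a red vertex `r ∈ R`, or a fresh candidate of the set `X`. -/
abbrev Cand (β : Type u) := β ⊕ ℕ

/-- The neighbors of the red vertex `r`. -/
def nbrR (Ed : Finset (β × β)) (r : β) : Finset β := (Ed.filter fun e => e.1 = r).image Prod.snd

/-- The neighbors of the blue vertex `b`. -/
def nbrB (Ed : Finset (β × β)) (b : β) : Finset β := (Ed.filter fun e => e.2 = b).image Prod.fst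

/-- The set `X` of `|R|` fresh candidates. -/
def Xset (R : Finset β) : Finset (Cand β) :=
  (Finset.range R.card).image fun j => (Sum.inr j : Cand β)

/-- The candidate set `C = R ∪ X`. -/
def Ctot (R : Finset β) : Finset (Cand β) := R.image Sum.inl ∪ Xset R

/-- The votes: for each blue vertex `b ∈ B`, the vote `v(b) = N_G(b)`, and for each
`x ∈ X`, `d` copies of the vote `{x}`. -/
def votes (Ed : Finset (β × β)) (R B : Finset β) (d : ℕ) : Multiset (Finset (Cand β)) :=
  B.val.map (fun b => (nbrB Ed b).image Sum.inl)
    + (Finset.range R.card).val.bind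
        (fun j => Multiset.replicate d ({Sum.inr j} : Finset (Cand β)))

end Stmt15

section ApprovalCount

variable [DecidableEq α]

def approvalCount (V : Multiset (Finset α)) (c : α) : ℕ :=
  Multiset.card (V.filter fun v => c ∈ v)

lemma approvalCount_add (V W : Multiset (Finset α)) (c : α) :
    approvalCount (V + W) c = approvalCount V c + approvalCount W c := by
  simp [approvalCount]

lemma approvalCount_bind {ι : Type*} (s : Multiset ι) (g : ι → Multiset (Finset α)) (c : α) :
    approvalCount (s.bind g) c = (s.map fun i => approvalCount (g i) c).sum := by
  simp [approvalCount, Multiset.filter_bind, Multiset.card_bind]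

lemma approvalCount_replicate (n : ℕ) (v : Finset α) (c : α) :
    approvalCount (Multiset.replicate n v) c = if c ∈ v then n else 0 := by
  split_ifs with h
  · rw [approvalCount, Multiset.filter_eq_self.mpr, Multiset.card_replicate]
    exact fun u hu => Multiset.eq_of_mem_replicate hu ▸ h
  · rw [approvalCount, Multiset.filter_eq_nil.mpr, Multiset.card_zero]
    exact fun u hu => Multiset.eq_of_mem_replicate hu ▸ h

lemma approvalCount_map {ι : Type*} (s : Finset ι) (f : ι → Finset α) (c : α) :
    approvalCount (s.val.map f) c = (s.filter fun i => c ∈ f i).card := by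
  simp [approvalCount, Multiset.filter_map, Finset.card, Finset.filter_val]

lemma approvalCount_mono {V W : Multiset (Finset α)} (h : V ≤ W) (c : α) :
    approvalCount V c ≤ approvalCount W c :=
  Multiset.card_le_card (Multiset.filter_le_filter _ h)

lemma approvalCount_sub {V W : Multiset (Finset α)} (h : W ≤ V) (c : α) :
    approvalCount (V - W) c = approvalCount V c - approvalCount W c := by
  rw [approvalCount, Multiset.filter_sub, Multiset.card_sub (Multiset.filter_le_filter _ h)]
  rfl

lemma approvalCount_pos_iff (V : Multiset (Finset α)) {c : α} :
    0 < approvalCount V c ↔ ∃ v ∈ V, c ∈ v := by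
  simp [approvalCount, Multiset.card_pos_iff_exists_mem]

end ApprovalCount

section SequentialThiele

variable [DecidableEq α] (ω : ℕ → ℝ) (pri : α → ℕ) (V : Multiset (Finset α))

/-- When no vote approving `c` meets `w`, adding `c` raises each of its approvers from
`ω 0` to `ω 1`. -/
lemma marginContrib_eq_approvalCount_mul (hω0 : ω 0 = 0) {w : Finset α} {c : α}
    (hdisj : ∀ v ∈ V, c ∈ v → Disjoint v w) :
    marginContrib ω V w c = approvalCount V c * ω 1 := by
  induction V using Multiset.induction_on with
  | empty => simp [marginContrib, thieleScore, approvalCount]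
  | cons v V ih =>
    have hV := ih fun u hu => hdisj u (Multiset.mem_cons_of_mem hu)
    simp only [marginContrib, thieleScore, Multiset.map_cons, Multiset.sum_cons] at hV ⊢
    rw [add_sub_add_comm, hV, approvalCount, approvalCount, Multiset.filter_cons]
    by_cases hc : c ∈ v
    · have hvw : v ∩ w = ∅ := Finset.disjoint_iff_inter_eq_empty.mp
        (hdisj v (Multiset.mem_cons_self v V) hc)
      have hvcw : v ∩ insert c w = {c} := by
        rw [Finset.inter_insert_of_mem hc, hvw]; rfl
      simp [hc, hvw, hvcw, hω0, add_mul, add_comm]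
    · simp [hc, Finset.inter_insert_of_notMem]

lemma seqNext_nonempty {C w : Finset α} (h : (maxMarginSet ω V C w).Nonempty) :
    (seqNext ω pri V C w).Nonempty := by
  obtain ⟨a, ha, hmin⟩ := Finset.exists_min_image _ pri h
  exact ⟨a, Finset.mem_filter.mpr ⟨ha, hmin⟩⟩

lemma maxMarginSet_nonempty {C w : Finset α} (h : (C \ w).Nonempty) :
    (maxMarginSet ω V C w).Nonempty := by
  obtain ⟨c, hc, hmax⟩ := Finset.exists_max_image _ (marginContrib ω V w) h
  exact ⟨c, Finset.mem_filter.mpr ⟨hc, hmax⟩⟩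

lemma seqNext_eq_singleton {C w : Finset α} (hinj : Set.InjOn pri C) (h : (C \ w).Nonempty) :
    ∃ a ∈ maxMarginSet ω V C w, seqNext ω pri V C w = {a} := by
  obtain ⟨a, ha⟩ := seqNext_nonempty ω pri V (maxMarginSet_nonempty ω V h)
  have hsub : seqNext ω pri V C w ⊆ C := fun x hx =>
    (Finset.mem_sdiff.mp (Finset.mem_filter.mp (Finset.mem_filter.mp hx).1).1).1
  refine ⟨a, (Finset.mem_filter.mp ha).1, Finset.eq_singleton_iff_unique_mem.mpr ⟨ha, ?_⟩⟩
  intro b hb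
  exact hinj (hsub hb) (hsub ha) <| le_antisymm
    ((Finset.mem_filter.mp hb).2 a (Finset.mem_filter.mp ha).1)
    ((Finset.mem_filter.mp ha).2 b (Finset.mem_filter.mp hb).1)

lemma seqCommittee_subset (C : Finset α) (n : ℕ) : seqCommittee ω pri V C n ⊆ C := by
  induction n with
  | zero => exact Finset.empty_subset _
  | succ n ih =>
    refine Finset.union_subset ih fun a ha => ?_
    exact (Finset.mem_sdiff.mp (Finset.mem_filter.mp (Finset.mem_filter.mp ha).1).1).1

lemma seqCommittee_monotone (C : Finset α) : Monotone (seqCommittee ω pri V C) :=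
  monotone_nat_of_le_succ fun _ => Finset.subset_union_left

lemma seqCommittee_subset_of_forall_lt {C S : Finset α} (hinj : Set.InjOn pri C) (hS : S ⊆ C)
    (hlt : ∀ w ⊆ S, ∀ s ∈ S \ w, ∀ c ∈ C \ S, marginContrib ω V w c < marginContrib ω V w s)
    {n : ℕ} (hn : n ≤ S.card) :
    seqCommittee ω pri V C n ⊆ S ∧ (seqCommittee ω pri V C n).card = n := by
  induction n with
  | zero => exact ⟨Finset.empty_subset _, rfl⟩
  | succ n ih =>
    obtain ⟨hsub, hcard⟩ := ih (Nat.le_of_succ_le hn)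
    set w := seqCommittee ω pri V C n
    obtain ⟨s, hs⟩ : (S \ w).Nonempty := by
      rw [← Finset.card_pos, Finset.card_sdiff_of_subset hsub]; omega
    have hsC : s ∈ C \ w := Finset.sdiff_subset_sdiff hS le_rfl hs
    obtain ⟨a, ha, hnext⟩ := seqNext_eq_singleton ω pri V hinj ⟨s, hsC⟩
    obtain ⟨haC, hamax⟩ := Finset.mem_filter.mp ha
    have haS : a ∈ S := by
      by_contra haS
      exact (hlt w hsub s hs a (Finset.mem_sdiff.mpr ⟨(Finset.mem_sdiff.mp haC).1, haS⟩)).not_ge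
        (hamax s hsC)
    have hstep : seqCommittee ω pri V C (n + 1) = insert a w := by
      rw [seqCommittee, hnext, Finset.union_comm]; rfl
    rw [hstep, Finset.card_insert_of_notMem (Finset.mem_sdiff.mp haC).2, hcard]
    exact ⟨Finset.insert_subset haS hsub, rfl⟩

lemma exists_mem_seqCommittee_pri_le {C : Finset α} {k : ℕ} (hk : 0 < k) {c : α}
    (hc : c ∈ maxMarginSet ω V C ∅) : ∃ a ∈ seqCommittee ω pri V C k, pri a ≤ pri c := by
  obtain ⟨a, ha⟩ := seqNext_nonempty ω pri V ⟨c, hc⟩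
  refine ⟨a, seqCommittee_monotone ω pri V C hk ?_, (Finset.mem_filter.mp ha).2 c hc⟩
  simpa [seqCommittee] using ha

end SequentialThiele

namespace Stmt15

variable {β : Type u} [DecidableEq β]

def blueVote (Ed : Finset (β × β)) (b : β) : Finset (Cand β) := (nbrB Ed b).image Sum.inl

lemma votes_eq (Ed : Finset (β × β)) (R B : Finset β) (d : ℕ) :
    votes Ed R B d = B.val.map (blueVote Ed)
      + (Finset.range R.card).val.bind fun j => Multiset.replicate d {Sum.inr j} := rfl

lemma mem_nbrB {Ed : Finset (β × β)} {a b : β} : a ∈ nbrB Ed b ↔ (a, b) ∈ Ed := by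
  simp [nbrB]

lemma mem_nbrR {Ed : Finset (β × β)} {r b : β} : b ∈ nbrR Ed r ↔ (r, b) ∈ Ed := by
  simp [nbrR]

lemma inl_mem_blueVote {Ed : Finset (β × β)} {a b : β} :
    (Sum.inl a : Cand β) ∈ blueVote Ed b ↔ (a, b) ∈ Ed := by
  simp [blueVote, mem_nbrB]

lemma inr_notMem_blueVote {Ed : Finset (β × β)} {b : β} {j : ℕ} :
    (Sum.inr j : Cand β) ∉ blueVote Ed b := by
  simp [blueVote]

lemma mem_Xset {R : Finset β} {c : Cand β} : c ∈ Xset R ↔ ∃ j < R.card, Sum.inr j = c := by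
  simp [Xset]

lemma inl_notMem_Xset {R : Finset β} {r : β} : (Sum.inl r : Cand β) ∉ Xset R := by
  simp [Xset]

lemma card_Xset (R : Finset β) : (Xset R).card = R.card := by
  rw [Xset, Finset.card_image_of_injective _ Sum.inr_injective, Finset.card_range]

lemma inl_mem_Ctot {R : Finset β} {r : β} : (Sum.inl r : Cand β) ∈ Ctot R ↔ r ∈ R := by
  simp [Ctot, inl_notMem_Xset]

lemma mem_Ctot {R : Finset β} {c : Cand β} :
    c ∈ Ctot R ↔ (∃ r ∈ R, Sum.inl r = c) ∨ c ∈ Xset R := by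
  simp [Ctot]

lemma mem_votes {Ed : Finset (β × β)} {R B : Finset β} {d : ℕ} {v : Finset (Cand β)}
    (hv : v ∈ votes Ed R B d) : (∃ b ∈ B, blueVote Ed b = v) ∨ ∃ j : ℕ, {Sum.inr j} = v := by
  rcases Multiset.mem_add.mp hv with hv | hv
  · exact Or.inl (by simpa [blueVote] using hv)
  · obtain ⟨j, -, hj⟩ := Multiset.mem_bind.mp hv
    exact Or.inr ⟨j, (Multiset.eq_of_mem_replicate hj).symm⟩

/-- Blue votes only approve candidates of `R` and dummy votes are singletons, so a vote
approving a candidate outside `w ⊆ X` does not meet `w`. -/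
lemma disjoint_of_mem_votes {Ed : Finset (β × β)} {R B : Finset β} {d : ℕ}
    {v w : Finset (Cand β)} {c : Cand β} (hv : v ∈ votes Ed R B d) (hcv : c ∈ v) (hcw : c ∉ w)
    (hw : w ⊆ Xset R) : Disjoint v w := by
  rcases mem_votes hv with ⟨b, -, rfl⟩ | ⟨j, rfl⟩
  · refine Finset.disjoint_left.mpr fun x hxv hxw => ?_
    obtain ⟨a, -, rfl⟩ := Finset.mem_image.mp hxv
    exact inl_notMem_Xset (hw hxw)
  · rw [Finset.mem_singleton.mp hcv] at hcw
    exact Finset.disjoint_singleton_left.mpr hcw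

lemma marginContrib_of_le_votes (ω : ℕ → ℝ) (hω0 : ω 0 = 0) {Ed : Finset (β × β)}
    {R B : Finset β} {d : ℕ} {W : Multiset (Finset (Cand β))} (hW : W ≤ votes Ed R B d)
    {w : Finset (Cand β)} (hw : w ⊆ Xset R) {c : Cand β} (hcw : c ∉ w) :
    marginContrib ω W w c = approvalCount W c * ω 1 :=
  marginContrib_eq_approvalCount_mul ω W hω0 fun _ hv hcv =>
    disjoint_of_mem_votes (Multiset.mem_of_le hW hv) hcv hcw hw

lemma approvalCount_blueVotes_inr (Ed : Finset (β × β)) (B' : Finset β) (j : ℕ) :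
    approvalCount (B'.val.map (blueVote Ed)) (Sum.inr j) = 0 := by
  simp [approvalCount, Multiset.filter_map, inr_notMem_blueVote]

lemma approvalCount_votes_inl {Ed : Finset (β × β)} {R B : Finset β}
    (hEd : ∀ e ∈ Ed, e.1 ∈ R ∧ e.2 ∈ B) (d : ℕ) (r : β) :
    approvalCount (votes Ed R B d) (Sum.inl r) = (nbrR Ed r).card := by
  have hblue : B.filter (fun b => (Sum.inl r : Cand β) ∈ blueVote Ed b) = nbrR Ed r := by
    ext b
    simp only [Finset.mem_filter, inl_mem_blueVote, mem_nbrR, and_iff_right_iff_imp]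
    exact fun h => (hEd _ h).2
  simp [votes_eq, approvalCount_add, approvalCount_map, approvalCount_bind,
    approvalCount_replicate, hblue]

lemma approvalCount_votes_inr (Ed : Finset (β × β)) (R B : Finset β) (d : ℕ) {j : ℕ}
    (hj : j < R.card) : approvalCount (votes Ed R B d) (Sum.inr j) = d := by
  simp [votes_eq, approvalCount_add, approvalCount_map, approvalCount_bind,
    approvalCount_replicate, inr_notMem_blueVote]
  rw [← Finset.range_val, Finset.sum_map_val, Finset.sum_ite_eq, if_pos (Finset.mem_range.mpr hj)]

lemma approvalCount_votes_of_mem_Ctot {Ed : Finset (β × β)} {R B : Finset β}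
    (hEd : ∀ e ∈ Ed, e.1 ∈ R ∧ e.2 ∈ B) {d : ℕ} (hdegR : ∀ r ∈ R, (nbrR Ed r).card = d)
    {c : Cand β} (hc : c ∈ Ctot R) : approvalCount (votes Ed R B d) c = d := by
  rcases mem_Ctot.mp hc with ⟨r, hr, rfl⟩ | hc
  · rw [approvalCount_votes_inl hEd, hdegR r hr]
  · obtain ⟨j, hj, rfl⟩ := mem_Xset.mp hc
    exact approvalCount_votes_inr Ed R B d hj

lemma inl_notMem_seqCommittee_of_approvalCount_lt (ω : ℕ → ℝ) (hω0 : ω 0 = 0)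
    (hω1 : 0 < ω 1) {Ed : Finset (β × β)} {R B : Finset β} {d : ℕ}
    {W : Multiset (Finset (Cand β))} (hW : W ≤ votes Ed R B d) {pri : Cand β → ℕ}
    (hinj : Set.InjOn pri (Ctot R : Set (Cand β)))
    (hX : ∀ j < R.card, approvalCount W (Sum.inr j) = d)
    (hR : ∀ r ∈ R, approvalCount W (Sum.inl r) < d) (r : β) :
    (Sum.inl r : Cand β) ∉ seqCommittee ω pri W (Ctot R) R.card := by
  have hlt : ∀ w ⊆ Xset R, ∀ s ∈ Xset R \ w, ∀ c ∈ Ctot R \ Xset R,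
      marginContrib ω W w c < marginContrib ω W w s := by
    intro w hw s hs c hc
    obtain ⟨hsX, hsw⟩ := Finset.mem_sdiff.mp hs
    obtain ⟨hcC, hcX⟩ := Finset.mem_sdiff.mp hc
    obtain ⟨r, hr, rfl⟩ := (mem_Ctot.mp hcC).resolve_right hcX
    obtain ⟨j, hj, rfl⟩ := mem_Xset.mp hsX
    rw [marginContrib_of_le_votes ω hω0 hW hw (fun h => hcX (hw h)),
      marginContrib_of_le_votes ω hω0 hW hw hsw, hX j hj]
    exact mul_lt_mul_of_pos_right (by exact_mod_cast hR r hr) hω1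
  intro hr
  have hsub := (seqCommittee_subset_of_forall_lt ω pri W hinj Finset.subset_union_right hlt
    (card_Xset R).ge).1
  exact inl_notMem_Xset (hsub hr)

lemma approvalCount_inl_lt_of_notMem_seqCommittee (ω : ℕ → ℝ) (hω0 : ω 0 = 0)
    (hω1 : 0 < ω 1) {Ed : Finset (β × β)} {R B : Finset β}
    (hEd : ∀ e ∈ Ed, e.1 ∈ R ∧ e.2 ∈ B) {d : ℕ} (hdegR : ∀ r ∈ R, (nbrR Ed r).card = d)
    {W : Multiset (Finset (Cand β))} (hW : W ≤ votes Ed R B d) {pri : Cand β → ℕ}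
    (hpri : ∀ r ∈ R, ∀ j ∈ Finset.range R.card,
      pri (Sum.inl r : Cand β) < pri (Sum.inr j : Cand β))
    (hcom : ∀ r ∈ R, (Sum.inl r : Cand β) ∉ seqCommittee ω pri W (Ctot R) R.card) :
    ∀ r ∈ R, approvalCount W (Sum.inl r) < d := by
  intro r hr
  by_contra! hge
  have hmarg : ∀ c : Cand β, marginContrib ω W ∅ c = approvalCount W c * ω 1 := fun c =>
    marginContrib_of_le_votes ω hω0 hW (Finset.empty_subset _) (Finset.notMem_empty c)
  have hmax : (Sum.inl r : Cand β) ∈ maxMarginSet ω W (Ctot R) ∅ := by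
    refine Finset.mem_filter.mpr ⟨by simpa [inl_mem_Ctot] using hr, fun c hc => ?_⟩
    have hcd : approvalCount W c ≤ d := (approvalCount_mono hW c).trans_eq
      (approvalCount_votes_of_mem_Ctot hEd hdegR (Finset.sdiff_subset hc))
    rw [hmarg, hmarg]
    exact mul_le_mul_of_nonneg_right (by exact_mod_cast hcd.trans hge) hω1.le
  obtain ⟨a, ha, hpa⟩ := exists_mem_seqCommittee_pri_le ω pri W (Finset.card_pos.mpr ⟨r, hr⟩) hmax
  rcases mem_Ctot.mp (seqCommittee_subset ω pri W _ _ ha) with ⟨r', hr', rfl⟩ | haX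
  · exact hcom r' hr' ha
  · obtain ⟨j, hj, rfl⟩ := mem_Xset.mp haX
    exact (hpri r hr j (Finset.mem_range.mpr hj)).not_ge hpa

lemma blueVotes_le_votes {Ed : Finset (β × β)} {R B B' : Finset β} (d : ℕ) (hB' : B' ⊆ B) :
    B'.val.map (blueVote Ed) ≤ votes Ed R B d :=
  (Multiset.map_le_map (Finset.val_le_iff.mpr hB')).trans (Multiset.le_add_right _ _)

lemma inl_notMem_seqCommittee_of_dominating (ω : ℕ → ℝ) (hω0 : ω 0 = 0) (hω1 : 0 < ω 1)
    {Ed : Finset (β × β)} {R B : Finset β} (hEd : ∀ e ∈ Ed, e.1 ∈ R ∧ e.2 ∈ B) {d : ℕ}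
    (hdegR : ∀ r ∈ R, (nbrR Ed r).card = d) {pri : Cand β → ℕ}
    (hinj : Set.InjOn pri (Ctot R : Set (Cand β))) {B' : Finset β} (hB' : B' ⊆ B)
    (hdom : ∀ r ∈ R, ∃ b ∈ B', (r, b) ∈ Ed) (r : β) : (Sum.inl r : Cand β) ∉
      seqCommittee ω pri (votes Ed R B d - B'.val.map (blueVote Ed)) (Ctot R) R.card := by
  have hV' := blueVotes_le_votes (Ed := Ed) (R := R) d hB'
  refine inl_notMem_seqCommittee_of_approvalCount_lt ω hω0 hω1 tsub_le_self hinj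
    (fun j hj => ?_) (fun r hr => ?_) r
  · rw [approvalCount_sub hV', approvalCount_votes_inr Ed R B d hj,
      approvalCount_blueVotes_inr, Nat.sub_zero]
  · have hpos : 0 < approvalCount (B'.val.map (blueVote Ed)) (Sum.inl r) := by
      obtain ⟨b, hb, hrb⟩ := hdom r hr
      exact (approvalCount_pos_iff _).mpr
        ⟨blueVote Ed b, Multiset.mem_map_of_mem _ hb, inl_mem_blueVote.mpr hrb⟩
    have hvotes := approvalCount_votes_of_mem_Ctot (B := B) hEd hdegR (inl_mem_Ctot.mpr hr)
    have hle := hvotes ▸ approvalCount_mono hV' (Sum.inl r)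
    rw [approvalCount_sub hV', hvotes]
    omega

/-- Distinct blue vertices may have the same neighbourhood, so `B'` is taken injective on
votes to keep `|B'| ≤ |V'|`. -/
lemma exists_dominating_of_approves {Ed : Finset (β × β)} {R B : Finset β} {d : ℕ}
    {V' : Multiset (Finset (Cand β))} (hV' : V' ≤ votes Ed R B d)
    (happ : ∀ r ∈ R, ∃ v ∈ V', (Sum.inl r : Cand β) ∈ v) :
    ∃ B' ⊆ B, B'.card ≤ Multiset.card V' ∧ ∀ r ∈ R, ∃ b ∈ B', (r, b) ∈ Ed := by
  set T := (B.image (blueVote Ed)).filter (· ∈ V')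
  have hsurj : Set.SurjOn (blueVote Ed) B T := fun v hv => by
    simpa using (Finset.mem_filter.mp hv).1
  obtain ⟨u, huB, huinj, hu⟩ := Finset.exists_subset_injOn_image_eq_of_surjOn _ T hsurj
  refine ⟨u, Finset.coe_subset.mp huB, ?_, fun r hr => ?_⟩
  · calc u.card = T.card := by rw [← hu, Finset.card_image_of_injOn huinj]
      _ ≤ V'.toFinset.card := Finset.card_le_card fun v hv => by
          simpa using (Finset.mem_filter.mp hv).2
      _ ≤ Multiset.card V' := Multiset.toFinset_card_le V'
  · obtain ⟨v, hv, hrv⟩ := happ r hr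
    rcases mem_votes (Multiset.mem_of_le hV' hv) with ⟨b, hb, rfl⟩ | ⟨j, rfl⟩
    · have hbT : blueVote Ed b ∈ u.image (blueVote Ed) := by
        rw [hu]; exact Finset.mem_filter.mpr ⟨Finset.mem_image_of_mem _ hb, hv⟩
      obtain ⟨b', hb', hbb'⟩ := Finset.mem_image.mp hbT
      exact ⟨b', hb', inl_mem_blueVote.mp (hbb' ▸ hrv)⟩
    · simp at hrv

theorem dcdv_seq_thiele_general (ω : ℕ → ℝ) (hω0 : ω 0 = 0)
    (hω1 : 0 < ω 1)
    (R B : Finset β) (Ed : Finset (β × β))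
    (hEd : ∀ e ∈ Ed, e.1 ∈ R ∧ e.2 ∈ B)
    (d : ℕ) (hdegR : ∀ r ∈ R, (nbrR Ed r).card = d)
    (κ : ℕ)
    (pri : Cand β → ℕ) (hinj : Set.InjOn pri (Ctot R : Set (Cand β)))
    (hpri : ∀ r ∈ R, ∀ j ∈ Finset.range R.card,
      pri (Sum.inl r : Cand β) < pri (Sum.inr j : Cand β)) :
    (∃ B' ⊆ B, B'.card ≤ κ ∧ ∀ r ∈ R, ∃ b ∈ B', (r, b) ∈ Ed) ↔
      (∃ V' ≤ votes Ed R B d, Multiset.card V' ≤ κ ∧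
        ∀ r ∈ R, (Sum.inl r : Cand β) ∉
          seqCommittee ω pri (votes Ed R B d - V') (Ctot R) R.card) := by
  constructor
  · rintro ⟨B', hB', hcard, hdom⟩
    exact ⟨_, blueVotes_le_votes d hB', by simpa using hcard,
      fun r _ => inl_notMem_seqCommittee_of_dominating ω hω0 hω1 hEd hdegR hinj hB' hdom r⟩
  · rintro ⟨V', hV', hcard, hcom⟩
    have hlt := approvalCount_inl_lt_of_notMem_seqCommittee ω hω0 hω1 hEd hdegR tsub_le_self
      hpri hcom
    have happ : ∀ r ∈ R, ∃ v ∈ V', (Sum.inl r : Cand β) ∈ v := fun r hr => by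
      have h := hlt r hr
      rw [approvalCount_sub hV', approvalCount_votes_inl hEd, hdegR r hr] at h
      exact (approvalCount_pos_iff V').mp (by omega)
    obtain ⟨B', hB', hB'card, hdom⟩ := exists_dominating_of_approves hV' happ
    exact ⟨B', hB', hB'card.trans hcard, hdom⟩

/-- correctness of the reduction from Red-Blue Dominating Set to
destructive control by deleting voters for sequential ω-Thiele rules with `ω(1) > 0`. -/
theorem dcdv_seq_thiele (ω : ℕ → ℝ) (hω0 : ω 0 = 0) (hmono : ∀ i, ω i ≤ ω (i + 1))
    (hω1 : 0 < ω 1)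
    (R B : Finset β) (hRB : Disjoint R B) (Ed : Finset (β × β))
    (hEd : ∀ e ∈ Ed, e.1 ∈ R ∧ e.2 ∈ B)
    (hnoisoB : ∀ b ∈ B, (nbrB Ed b).Nonempty)
    (d : ℕ) (hd : 1 ≤ d) (hdegR : ∀ r ∈ R, (nbrR Ed r).card = d)
    (κ : ℕ)
    (pri : Cand β → ℕ) (hinj : Set.InjOn pri (Ctot R : Set (Cand β)))
    (hpri : ∀ r ∈ R, ∀ j ∈ Finset.range R.card,
      pri (Sum.inl r : Cand β) < pri (Sum.inr j : Cand β)) :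
    (∃ B' ⊆ B, B'.card ≤ κ ∧ ∀ r ∈ R, ∃ b ∈ B', (r, b) ∈ Ed) ↔
      (∃ V' ≤ votes Ed R B d, Multiset.card V' ≤ κ ∧
        ∀ r ∈ R, (Sum.inl r : Cand β) ∉
          seqCommittee ω pri (votes Ed R B d - V') (Ctot R) R.card) :=
  dcdv_seq_thiele_general ω hω0 hω1 R B Ed hEd d hdegR κ pri hinj hpri

end Stmt15
end
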